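/- Let a > 0, α ∈ ℝ, β ∈ {1,2}. Suppose (μ_t)_{t≥0} and (ν_t)_{t≥0} are two families of Borel probability measures on ℝ, each supported in (0,∞), each with all moments finite and continuous as functions of t, with μ_0 = ν_0 = δ_a, and each satisfying for every f ∈ C²(ℝ) of polynomial growth and every t ≥ 0 the geometric-Brownian-motion limiting equation ⟨μ_t,f⟩ = f(a) + α ∫_0^t ∫_ℝ x f'(x) μ_s(dx) ds + β ∫_0^t ∬_{ℝ²} Δf(x,y)·xy μ_s(dx)μ_s(dy) ds (and likewise for ν). Then μ_t = ν_t for every t ≥ 0. -/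

import Mathlib

/-!
Testing the limiting equation against `f(x) = xⁿ` yields a closed triangular system of Volterra
equations for the moments `mₙ(t) = ⟨μ_t, xⁿ⟩`: the equation for `mₙ` involves `mₙ` linearly and
otherwise only products `mᵢ mₙ₋ᵢ` with `0 < i < n`. By induction on `n` and Grönwall's lemma the
moments of `μ_t` and `ν_t` agree. The same system, with the weights `1/n²` absorbing the
convolution, bounds `mₙ(t)` by `Kₜⁿ`; by Markov's inequality both measures then live on the compact
interval `[0, Kₜ + 1]`, where Weierstrass approximation shows that moments determine the measure.
-/

open MeasureTheory Filter Set

/-- The difference quotient of the derivative: `Δf(x,y) = (f'(x)-f'(y))/(x-y)` for `x ≠ y`,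
and `Δf(x,x) = f''(x)`. -/
noncomputable def deltaF (f : ℝ → ℝ) (x y : ℝ) : ℝ :=
  if x = y then deriv (deriv f) x else (deriv f x - deriv f y) / (x - y)

/-- A `C²` function of polynomial growth (together with its first two derivatives). -/
def PolyGrowthC2 (f : ℝ → ℝ) : Prop :=
  ContDiff ℝ 2 f ∧ ∃ C > (0:ℝ), ∃ m : ℕ, ∀ x : ℝ,
    |f x| + |deriv f x| + |deriv (deriv f) x| ≤ C * (1 + |x| ^ m)

open Real

lemma deriv_deriv_pow (n : ℕ) (x : ℝ) :
    deriv (deriv fun x : ℝ => x ^ n) x = n * (n - 1 : ℕ) * x ^ (n - 2) := by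
  have : deriv (fun x : ℝ => x ^ n) = fun x => (n : ℝ) * x ^ (n - 1) :=
    funext fun x => deriv_pow_field n
  simp only [this, deriv_const_mul_field', deriv_pow_field, Nat.sub_sub, mul_assoc]

lemma sub_mul_sum_Ioo_pow_mul_pow (n : ℕ) (x y : ℝ) :
    (x - y) * ∑ i ∈ Finset.Ioo 0 n, x ^ i * y ^ (n - i) = x * y * (x ^ (n - 1) - y ^ (n - 1)) := by
  rcases n with _ | _ | k
  · simp
  · simp [show Finset.Ioo 0 1 = ∅ from rfl]
  rw [show Finset.Ioo 0 (k + 2) = Finset.Ico 1 (k + 2) from rfl, Finset.sum_Ico_eq_sum_range,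
    mul_comm (x - y), ← geom_sum₂_mul, ← mul_assoc, Finset.mul_sum]
  congr 1
  refine Finset.sum_congr (by simp) fun j hj => ?_
  have hj : j ≤ k := Nat.lt_succ_iff.mp (by simpa using hj)
  rw [show k + 2 - (1 + j) = (k - j) + 1 by omega, show k + 1 + 1 - 1 - 1 - j = k - j by omega]
  ring

lemma deltaF_pow_mul (n : ℕ) (x y : ℝ) :
    deltaF (fun x => x ^ n) x y * (x * y) = n * ∑ i ∈ Finset.Ioo 0 n, x ^ i * y ^ (n - i) := by
  unfold deltaF
  split_ifs with hxy
  · subst hxy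
    rw [deriv_deriv_pow]
    have : ∀ i ∈ Finset.Ioo 0 n, x ^ i * x ^ (n - i) = x ^ n := fun i hi => by
      rw [← pow_add, Nat.add_sub_cancel' (Finset.mem_Ioo.mp hi).2.le]
    rw [Finset.sum_congr rfl this, Finset.sum_const, Nat.card_Ioo, nsmul_eq_mul]
    rcases n with _ | _ | k
    · simp
    · simp
    · push_cast; ring
  · have hxy' : x - y ≠ 0 := sub_ne_zero.mpr hxy
    simp only [deriv_pow_field]
    rw [← mul_right_inj' hxy', mul_left_comm _ (n : ℝ), sub_mul_sum_Ioo_pow_mul_pow]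
    field_simp

lemma pow_le_one_add_pow {r : ℝ} (hr : 0 ≤ r) {j n : ℕ} (h : j ≤ n) : r ^ j ≤ 1 + r ^ n := by
  rcases le_total r 1 with hr1 | hr1
  · linarith [pow_le_one₀ hr hr1 (n := j), pow_nonneg hr n]
  · linarith [pow_le_pow_right₀ hr1 h]

lemma polyGrowthC2_pow (n : ℕ) : PolyGrowthC2 (fun x => x ^ n) := by
  refine ⟨contDiff_id.pow n, 1 + n + n ^ 2, by positivity, n, fun x => ?_⟩
  have hx := abs_nonneg x
  have h0 := pow_le_one_add_pow hx (le_refl n)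
  have h1 := pow_le_one_add_pow hx (Nat.sub_le n 1)
  have h2 := pow_le_one_add_pow hx (Nat.sub_le n 2)
  have hn : ((n - 1 : ℕ) : ℝ) ≤ n := by exact_mod_cast Nat.sub_le n 1
  simp only [deriv_pow_field, deriv_deriv_pow, abs_mul, abs_pow, Nat.abs_cast]
  calc |x| ^ n + n * |x| ^ (n - 1) + n * (n - 1 : ℕ) * |x| ^ (n - 2)
      ≤ (1 + |x| ^ n) + n * (1 + |x| ^ n) + n * n * (1 + |x| ^ n) := by gcongr
    _ = (1 + n + n ^ 2) * (1 + |x| ^ n) := by ring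

lemma sum_Ioo_inv_sq_mul_inv_sq_le (n : ℕ) :
    ∑ i ∈ Finset.Ioo 0 n, ((i : ℝ) ^ 2)⁻¹ * (((n - i : ℕ) : ℝ) ^ 2)⁻¹ ≤ 8 / (n : ℝ) ^ 2 := by
  have hterm : ∀ i ∈ Finset.Ioo 0 n, ((i : ℝ) ^ 2)⁻¹ * (((n - i : ℕ) : ℝ) ^ 2)⁻¹
      ≤ 2 / (n : ℝ) ^ 2 * (((i : ℝ) ^ 2)⁻¹ + (((n - i : ℕ) : ℝ) ^ 2)⁻¹) := by
    intro i hi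
    obtain ⟨hi0, hin⟩ := Finset.mem_Ioo.mp hi
    have hi' : (0 : ℝ) < i := by exact_mod_cast hi0
    have hl : (0 : ℝ) < (n - i : ℕ) := by exact_mod_cast Nat.sub_pos_of_lt hin
    have hsum : (n : ℝ) = i + (n - i : ℕ) := by
      rw [Nat.cast_sub hin.le]; ring
    rw [hsum]
    field_simp
    nlinarith [sq_nonneg ((i : ℝ) - (n - i : ℕ))]
  have hreflect : ∑ i ∈ Finset.Ioo 0 n, (((n - i : ℕ) : ℝ) ^ 2)⁻¹
      = ∑ i ∈ Finset.Ioo 0 n, ((i : ℝ) ^ 2)⁻¹ :=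
    Finset.sum_nbij' (fun i => n - i) (fun i => n - i) (by intro i hi; simp at hi ⊢; omega)
      (by intro i hi; simp at hi ⊢; omega) (by intro i hi; simp at hi ⊢; omega)
      (by intro i hi; simp at hi ⊢; omega) (fun i hi => rfl)
  have h2 : ∑ i ∈ Finset.Ioo 0 n, ((i : ℝ) ^ 2)⁻¹ ≤ 2 := by
    simpa using sum_Ioo_inv_sq_le (α := ℝ) 0 n
  calc _ ≤ ∑ i ∈ Finset.Ioo 0 n, 2 / (n : ℝ) ^ 2 * (((i : ℝ) ^ 2)⁻¹ + (((n - i : ℕ) : ℝ) ^ 2)⁻¹) :=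
        Finset.sum_le_sum hterm
    _ = 2 / (n : ℝ) ^ 2 * (2 * ∑ i ∈ Finset.Ioo 0 n, ((i : ℝ) ^ 2)⁻¹) := by
        rw [← Finset.mul_sum, Finset.sum_add_distrib, hreflect, two_mul]
    _ ≤ 2 / (n : ℝ) ^ 2 * (2 * 2) := by gcongr
    _ = 8 / (n : ℝ) ^ 2 := by ring

lemma sum_Ioo_mul_le_of_le_pow_div_sq {x : ℕ → ℝ} {C : ℝ} {n : ℕ} (hC : 0 ≤ C)
    (hx : ∀ i ∈ Finset.Ioo 0 n, 0 ≤ x i ∧ x i ≤ C ^ i / (i : ℝ) ^ 2) :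
    ∑ i ∈ Finset.Ioo 0 n, x i * x (n - i) ≤ 8 * C ^ n / (n : ℝ) ^ 2 := by
  have hterm : ∀ i ∈ Finset.Ioo 0 n, x i * x (n - i)
      ≤ C ^ n * (((i : ℝ) ^ 2)⁻¹ * (((n - i : ℕ) : ℝ) ^ 2)⁻¹) := by
    intro i hi
    have hni : n - i ∈ Finset.Ioo 0 n := by simp only [Finset.mem_Ioo] at hi ⊢; omega
    calc x i * x (n - i) ≤ C ^ i / (i : ℝ) ^ 2 * (C ^ (n - i) / ((n - i : ℕ) : ℝ) ^ 2) :=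
          mul_le_mul (hx i hi).2 (hx _ hni).2 (hx _ hni).1 (by positivity)
      _ = _ := by
          rw [← Nat.add_sub_cancel' (Finset.mem_Ioo.mp hi).2.le, pow_add, Nat.add_sub_cancel_left]
          ring
  calc _ ≤ ∑ i ∈ Finset.Ioo 0 n, C ^ n * (((i : ℝ) ^ 2)⁻¹ * (((n - i : ℕ) : ℝ) ^ 2)⁻¹) :=
        Finset.sum_le_sum hterm
    _ ≤ C ^ n * (8 / (n : ℝ) ^ 2) := by
        rw [← Finset.mul_sum]; gcongr; exact sum_Ioo_inv_sq_mul_inv_sq_le n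
    _ = _ := by ring

lemma two_mul_sq_le_four_pow {n : ℕ} (hn : 0 < n) : 2 * n ^ 2 ≤ 4 ^ n := by
  induction n, hn using Nat.le_induction with
  | base => norm_num
  | succ n hn ih =>
    have h1 : 1 ≤ n := hn
    rw [pow_succ 4 n]; nlinarith

lemma hasDerivWithinAt_integral_Ici {g : ℝ → ℝ} (hg : ContinuousOn g (Ici 0)) {x : ℝ}
    (hx : 0 ≤ x) : HasDerivWithinAt (fun t => ∫ s in (0:ℝ)..t, g s) (g x) (Ici x) x :=
  have hIoi : Ioi x ⊆ Ici 0 := fun y hy => hx.trans (le_of_lt hy)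
  intervalIntegral.integral_hasDerivWithinAt_right
    ((hg.mono (by simp [uIcc_of_le hx, Icc_subset_Ici_self])).intervalIntegrable)
    ((hg.mono hIoi).stronglyMeasurableAtFilter_nhdsWithin measurableSet_Ioi x)
    ((hg x hx).mono hIoi)

lemma continuousOn_integral_Icc {g : ℝ → ℝ} (hg : ContinuousOn g (Ici 0)) {T : ℝ} (hT : 0 ≤ T) :
    ContinuousOn (fun t => ∫ s in (0:ℝ)..t, g s) (Icc 0 T) := by
  simpa [uIcc_of_le hT] using intervalIntegral.continuousOn_primitive_interval (μ := volume)
    ((hg.mono (by simp [uIcc_of_le hT, Icc_subset_Ici_self])).integrableOn_compact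
      (isCompact_uIcc (a := 0) (b := T)))

theorem eq_zero_of_eq_mul_integral {e : ℝ → ℝ} {c : ℝ} (he : ContinuousOn e (Ici 0))
    (h : ∀ t, 0 ≤ t → e t = c * ∫ s in (0:ℝ)..t, e s) : ∀ t, 0 ≤ t → e t = 0 := fun T hT =>
  eq_zero_of_abs_deriv_le_mul_abs_self_of_eq_zero_right (he.mono Icc_subset_Ici_self)
    (fun x hx => ((hasDerivWithinAt_integral_Ici he hx.1).const_mul c).congr
      (fun y hy => h y (hx.1.trans hy)) (h x hx.1))
    (by simpa using h 0 le_rfl) (fun x _ => (norm_mul c (e x)).le) T ⟨hT, le_rfl⟩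

theorem le_mul_exp_of_le_add_integral {u : ℝ → ℝ} {A D L ρ : ℝ} (hu : ContinuousOn u (Ici 0))
    (hA : 0 ≤ A) (hD : 0 ≤ D) (hL : 0 ≤ L) (hLρ : L < ρ)
    (h : ∀ t, 0 ≤ t →
      u t ≤ A + D * (∫ s in (0:ℝ)..t, exp (ρ * s)) + L * ∫ s in (0:ℝ)..t, u s) :
    ∀ t, 0 ≤ t → u t ≤ (A + D / (ρ - L)) * exp (ρ * t) := by
  intro T hT
  set U : ℝ → ℝ := fun t => A + D * (∫ s in (0:ℝ)..t, exp (ρ * s)) + L * ∫ s in (0:ℝ)..t, u s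
  have hexp : ContinuousOn (fun s => exp (ρ * s)) (Ici 0) := by fun_prop
  have hU : ∀ x, 0 ≤ x → HasDerivWithinAt U (D * exp (ρ * x) + L * u x) (Ici x) x := fun x hx =>
    (((hasDerivWithinAt_integral_Ici hexp hx).const_mul D).const_add A).add
      ((hasDerivWithinAt_integral_Ici hu hx).const_mul L)
  have hUc : ContinuousOn U (Icc 0 T) :=
    (((continuousOn_integral_Icc hexp hT).const_smul D).const_add A).add
      ((continuousOn_integral_Icc hu hT).const_smul L)
  have hρL : 0 < ρ - L := sub_pos.mpr hLρ
  -- compare `exp (-L t) * U t` with the solution of `V' = D exp ((ρ - L) t)`, using `u ≤ U`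
  have hV : exp (-L * T) * U T ≤ A + D / (ρ - L) * (exp ((ρ - L) * T) - 1) := by
    refine image_le_of_deriv_right_le_deriv_boundary (a := 0) (b := T)
      (f := fun t => exp (-L * t) * U t)
      (f' := fun x => -L * exp (-L * x) * U x + exp (-L * x) * (D * exp (ρ * x) + L * u x))
      (B := fun t => A + D / (ρ - L) * (exp ((ρ - L) * t) - 1))
      (B' := fun x => D * exp ((ρ - L) * x))
      ((by fun_prop : Continuous fun t => exp (-L * t)).continuousOn.mul hUc)
      (fun x hx => ?_) (by simp [U]) (by fun_prop) (fun x _ => ?_) (fun x hx => ?_)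
      (right_mem_Icc.mpr hT)
    · exact (((hasDerivAt_id x).const_mul (-L)).exp.hasDerivWithinAt.mul (hU x hx.1)).congr_deriv
        (by simp only [id, mul_one]; ring)
    · have := ((((hasDerivAt_id x).const_mul (ρ - L)).exp.sub_const 1).const_mul
        (D / (ρ - L))).const_add A
      exact this.hasDerivWithinAt.congr_deriv (by simp only [id, mul_one]; field_simp)
    · have hux : L * u x ≤ L * U x := mul_le_mul_of_nonneg_left (h x hx.1) hL
      have : exp (-L * x) * exp (ρ * x) = exp ((ρ - L) * x) := by rw [← exp_add]; ring_nf
      nlinarith [exp_pos (-L * x)]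
  have hexp_add : exp (L * T) * exp ((ρ - L) * T) = exp (ρ * T) := by rw [← exp_add]; ring_nf
  calc u T ≤ U T := h T hT
    _ = exp (L * T) * (exp (-L * T) * U T) := by rw [← mul_assoc, ← exp_add]; simp
    _ ≤ exp (L * T) * (A + D / (ρ - L) * (exp ((ρ - L) * T) - 1)) := by gcongr
    _ = A * exp (L * T) + D / (ρ - L) * (exp (ρ * T) - exp (L * T)) := by
        rw [← hexp_add]; ring
    _ ≤ (A + D / (ρ - L)) * exp (ρ * T) := by
        have := exp_le_exp.mpr (mul_le_mul_of_nonneg_right hLρ.le hT)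
        nlinarith [exp_pos (L * T), div_nonneg hD hρL.le]

/-- `m n t` plays the role of `⟨μ_t, xⁿ⟩`; the last term is `β ∫ ⟨μ_s ⊗ μ_s, Δ(xⁿ)(x,y) x y⟩`
computed with `deltaF_pow_mul`. -/
def SolvesMomentEquations (a α β : ℝ) (m : ℕ → ℝ → ℝ) : Prop :=
  ∀ n : ℕ, ∀ t, 0 ≤ t → m n t = a ^ n + α * n * (∫ s in (0:ℝ)..t, m n s)
    + β * n * ∫ s in (0:ℝ)..t, ∑ i ∈ Finset.Ioo 0 n, m i s * m (n - i) s

namespace SolvesMomentEquations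

variable {a α β : ℝ} {m m' : ℕ → ℝ → ℝ}

theorem unique (hm : SolvesMomentEquations a α β m) (hm' : SolvesMomentEquations a α β m')
    (hc : ∀ n, ContinuousOn (m n) (Ici 0)) (hc' : ∀ n, ContinuousOn (m' n) (Ici 0)) (n : ℕ) :
    ∀ t, 0 ≤ t → m n t = m' n t := by
  induction n using Nat.strong_induction_on with
  | _ n ih =>
  have hconv : ∀ t, 0 ≤ t → (∫ s in (0:ℝ)..t, ∑ i ∈ Finset.Ioo 0 n, m i s * m (n - i) s)
      = ∫ s in (0:ℝ)..t, ∑ i ∈ Finset.Ioo 0 n, m' i s * m' (n - i) s := fun t ht =>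
    intervalIntegral.integral_congr fun s hs => Finset.sum_congr rfl fun i hi => by
      have hs : 0 ≤ s := by rw [uIcc_of_le ht] at hs; exact hs.1
      obtain ⟨hi0, hin⟩ := Finset.mem_Ioo.mp hi
      rw [ih i hin s hs, ih (n - i) (by omega) s hs]
  have hdiff := eq_zero_of_eq_mul_integral ((hc n).sub (hc' n)) (c := α * n) fun t ht => by
    simp only [Pi.sub_apply]
    rw [intervalIntegral.integral_sub
      (((hc n).mono Icc_subset_Ici_self).intervalIntegrable_of_Icc ht)
      (((hc' n).mono Icc_subset_Ici_self).intervalIntegrable_of_Icc ht), hm n t ht, hm' n t ht,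
      hconv t ht]
    ring
  exact fun t ht => sub_eq_zero.mp (hdiff t ht)

theorem le_add_integral_of_sum_le (hm : SolvesMomentEquations a α β m)
    (hc : ∀ n, ContinuousOn (m n) (Ici 0)) (hnonneg : ∀ n t, 0 ≤ t → 0 ≤ m n t) {n : ℕ}
    {E ρ : ℝ} (hsum : ∀ s, 0 ≤ s → ∑ i ∈ Finset.Ioo 0 n, m i s * m (n - i) s ≤ E * exp (ρ * s))
    {t : ℝ} (ht : 0 ≤ t) :
    m n t ≤ |a| ^ n + |β| * n * E * (∫ s in (0:ℝ)..t, exp (ρ * s))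
      + |α| * n * ∫ s in (0:ℝ)..t, m n s := by
  have hu : 0 ≤ ∫ s in (0:ℝ)..t, m n s :=
    intervalIntegral.integral_nonneg ht fun s hs => hnonneg n s hs.1
  have hsum_nonneg : 0 ≤ ∫ s in (0:ℝ)..t, ∑ i ∈ Finset.Ioo 0 n, m i s * m (n - i) s :=
    intervalIntegral.integral_nonneg ht fun s hs =>
      Finset.sum_nonneg fun i _ => mul_nonneg (hnonneg i s hs.1) (hnonneg (n - i) s hs.1)
  have hsum_le : (∫ s in (0:ℝ)..t, ∑ i ∈ Finset.Ioo 0 n, m i s * m (n - i) s)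
      ≤ E * ∫ s in (0:ℝ)..t, exp (ρ * s) :=
    (intervalIntegral.integral_mono_on ht
      ((continuousOn_finsetSum _ fun i _ => ((hc i).mul (hc (n - i))).mono
        Icc_subset_Ici_self).intervalIntegrable_of_Icc ht)
      (Continuous.intervalIntegrable (by fun_prop) _ _) fun s hs => hsum s hs.1).trans_eq
      (intervalIntegral.integral_const_mul _ _)
  rw [hm n t ht, add_right_comm, mul_assoc _ E]
  gcongr ?_ + ?_ + ?_
  · exact (le_abs_self _).trans (abs_pow a n).le
  · exact mul_le_mul (mul_le_mul_of_nonneg_right (le_abs_self β) n.cast_nonneg) hsum_le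
      hsum_nonneg (by positivity)
  · exact mul_le_mul_of_nonneg_right (mul_le_mul_of_nonneg_right (le_abs_self α) n.cast_nonneg) hu

theorem le_pow_div_sq (hm : SolvesMomentEquations a α β m) (hc : ∀ n, ContinuousOn (m n) (Ici 0))
    (hnonneg : ∀ n t, 0 ≤ t → 0 ≤ m n t) (n : ℕ) (hn : 0 < n) :
    ∀ t, 0 ≤ t → m n t ≤ (4 * |a| * exp ((|α| + 16 * |β| + 1) * t)) ^ n / n ^ 2 := by
  induction n using Nat.strong_induction_on with
  | _ n ih =>
  intro t ht
  set B := 4 * |a|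
  -- `16 * |β|` is what makes the convolution term at most half of the weight `Bⁿ / n²`
  set c := |α| + 16 * |β| + 1
  have hpow_exp : ∀ s, (B * exp (c * s)) ^ n = B ^ n * exp (n * c * s) := fun s => by
    rw [mul_pow, ← exp_nat_mul, mul_assoc]
  have hsum : ∀ s, 0 ≤ s → ∑ i ∈ Finset.Ioo 0 n, m i s * m (n - i) s
      ≤ 8 * B ^ n / n ^ 2 * exp (n * c * s) := fun s hs => by
    refine (sum_Ioo_mul_le_of_le_pow_div_sq (x := fun i => m i s) (by positivity)
      fun i hi => ⟨hnonneg i s hs, ih i (Finset.mem_Ioo.mp hi).2 (Finset.mem_Ioo.mp hi).1 s hs⟩)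
      |>.trans_eq ?_
    rw [hpow_exp]; ring
  have hn' : (0 : ℝ) < n := by exact_mod_cast hn
  have hLρ : |α| * n < n * c := by nlinarith [abs_nonneg β]
  have hgronwall := le_mul_exp_of_le_add_integral (hc n) (by positivity) (by positivity)
    (by positivity) hLρ fun s hs => hm.le_add_integral_of_sum_le hc hnonneg hsum hs
  have h4 : (2 * n ^ 2 : ℝ) ≤ 4 ^ n := by exact_mod_cast two_mul_sq_le_four_pow hn
  have hA : |a| ^ n ≤ B ^ n / (2 * n ^ 2) := by
    rw [le_div_iff₀ (by positivity), mul_pow]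
    exact mul_le_mul_of_nonneg_left h4 (by positivity) |>.trans_eq (mul_comm _ _)
  have hD : |β| * n * (8 * B ^ n / n ^ 2) / (n * c - |α| * n) ≤ B ^ n / (2 * n ^ 2) := by
    rw [show n * c - |α| * n = n * (16 * |β| + 1) by simp only [c]; ring,
      div_le_div_iff₀ (by positivity) (by positivity)]
    have hB : 0 ≤ B ^ n := by positivity
    field_simp
    nlinarith [mul_nonneg hB hn'.le, mul_nonneg (mul_nonneg hB hn'.le) hn'.le]
  calc m n t ≤ _ := hgronwall t ht
    _ ≤ (B ^ n / (2 * n ^ 2) + B ^ n / (2 * n ^ 2)) * exp (n * c * t) := by gcongr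
    _ = _ := by rw [hpow_exp]; ring

theorem le_pow (hm : SolvesMomentEquations a α β m) (hc : ∀ n, ContinuousOn (m n) (Ici 0))
    (hnonneg : ∀ n t, 0 ≤ t → 0 ≤ m n t) (n : ℕ) {t : ℝ} (ht : 0 ≤ t) :
    m n t ≤ (4 * |a| * exp ((|α| + 16 * |β| + 1) * t)) ^ n := by
  rcases Nat.eq_zero_or_pos n with rfl | hn
  · simpa using (hm 0 t ht).le
  exact (hm.le_pow_div_sq hc hnonneg n hn t ht).trans
    (div_le_self (by positivity) (by exact_mod_cast Nat.one_le_pow 2 n hn))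

end SolvesMomentEquations

lemma integral_integral_sum_pow_mul_pow {P : Measure ℝ}
    (hint : ∀ k : ℕ, Integrable (fun x => x ^ k) P) (n : ℕ) :
    ∫ x, ∫ y, ∑ i ∈ Finset.Ioo 0 n, x ^ i * y ^ (n - i) ∂P ∂P
      = ∑ i ∈ Finset.Ioo 0 n, (∫ x, x ^ i ∂P) * ∫ y, y ^ (n - i) ∂P := by
  simp_rw [integral_finsetSum _ fun i _ => (hint _).const_mul _, integral_const_mul]
  rw [integral_finsetSum _ fun i _ => (hint _).mul_const _]
  simp_rw [integral_mul_const]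

theorem solvesMomentEquations_integral_pow {a α β : ℝ} {μ : ℝ → Measure ℝ}
    (hint : ∀ t : ℝ, 0 ≤ t → ∀ k : ℕ, Integrable (fun x => x ^ k) (μ t))
    (heq : ∀ f : ℝ → ℝ, PolyGrowthC2 f → ∀ t : ℝ, 0 ≤ t →
      ∫ x, f x ∂(μ t) = f a
        + α * (∫ s in (0:ℝ)..t, ∫ x, x * deriv f x ∂(μ s))
        + β * ∫ s in (0:ℝ)..t, ∫ x, ∫ y, deltaF f x y * (x * y) ∂(μ s) ∂(μ s)) :
    SolvesMomentEquations a α β fun n t => ∫ x, x ^ n ∂(μ t) := by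
  intro n t ht
  have hdrift : ∀ s, ∫ x, x * deriv (fun x => x ^ n) x ∂(μ s) = n * ∫ x, x ^ n ∂(μ s) := by
    intro s
    rw [← integral_const_mul]
    congr 1 with x
    rw [deriv_pow_field]
    rcases n with _ | n
    · simp
    · rw [Nat.add_sub_cancel, pow_succ]; push_cast; ring
  have hdiffusion : ∀ s ∈ uIcc 0 t,
      ∫ x, ∫ y, deltaF (fun x => x ^ n) x y * (x * y) ∂(μ s) ∂(μ s)
        = n * ∑ i ∈ Finset.Ioo 0 n, (∫ x, x ^ i ∂(μ s)) * ∫ x, x ^ (n - i) ∂(μ s) := by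
    intro s hs
    rw [uIcc_of_le ht] at hs
    simp_rw [deltaF_pow_mul, integral_const_mul]
    rw [integral_integral_sum_pow_mul_pow (hint s hs.1)]
  beta_reduce
  rw [heq _ (polyGrowthC2_pow n) t ht]
  simp_rw [hdrift]
  rw [intervalIntegral.integral_congr hdiffusion, intervalIntegral.integral_const_mul,
    intervalIntegral.integral_const_mul]
  ring

lemma ae_le_of_integral_pow_le {P : Measure ℝ} [IsFiniteMeasure P] (hpos : ∀ᵐ x ∂P, 0 ≤ x)
    (hint : ∀ n : ℕ, Integrable (fun x => x ^ n) P) {K R : ℝ} (hK : 0 ≤ K) (hKR : K < R)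
    (h : ∀ n : ℕ, ∫ x, x ^ n ∂P ≤ K ^ n) : ∀ᵐ x ∂P, x ≤ R := by
  have hR : 0 < R := hK.trans_lt hKR
  have hmarkov : ∀ n : ℕ, P.real {x | R < x} ≤ (K / R) ^ n := by
    intro n
    have := mul_meas_ge_le_integral_of_nonneg (hpos.mono fun x hx => pow_nonneg hx n) (hint n)
      (R ^ n)
    rw [div_pow, le_div_iff₀' (by positivity)]
    calc R ^ n * P.real {x | R < x} ≤ R ^ n * P.real {x | R ^ n ≤ x ^ n} := by
          gcongr
          · exact measure_ne_top _ _
          · exact fun hx => pow_le_pow_left₀ hR.le hx.le n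
      _ ≤ K ^ n := this.trans (h n)
  have hlim : Tendsto (fun n : ℕ => (K / R) ^ n) atTop (nhds 0) :=
    tendsto_pow_atTop_nhds_zero_of_lt_one (div_nonneg hK hR.le) ((div_lt_one hR).mpr hKR)
  have hnull : P.real {x | R < x} = 0 :=
    le_antisymm (ge_of_tendsto' hlim hmarkov) measureReal_nonneg
  rw [measureReal_eq_zero_iff] at hnull
  exact measure_eq_zero_iff_ae_notMem.mp hnull |>.mono fun x hx => not_lt.mp hx

lemma integral_polynomial_eval {P : Measure ℝ} (hint : ∀ k : ℕ, Integrable (fun x => x ^ k) P)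
    (p : Polynomial ℝ) :
    Integrable (fun x => p.eval x) P ∧
      ∫ x, p.eval x ∂P = ∑ i ∈ Finset.range (p.natDegree + 1), p.coeff i * ∫ x, x ^ i ∂P := by
  simp_rw [Polynomial.eval_eq_sum_range]
  exact ⟨integrable_finsetSum _ fun i _ => (hint i).const_mul _,
    by rw [integral_finsetSum _ fun i _ => (hint i).const_mul _]; simp_rw [integral_const_mul]⟩

theorem ext_of_integral_pow_eq_of_ae_mem_Icc {P Q : Measure ℝ} [IsProbabilityMeasure P]
    [IsProbabilityMeasure Q] {a b : ℝ} (hP : ∀ᵐ x ∂P, x ∈ Icc a b) (hQ : ∀ᵐ x ∂Q, x ∈ Icc a b)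
    (hPint : ∀ k : ℕ, Integrable (fun x => x ^ k) P)
    (hQint : ∀ k : ℕ, Integrable (fun x => x ^ k) Q)
    (hmom : ∀ k : ℕ, ∫ x, x ^ k ∂P = ∫ x, x ^ k ∂Q) : P = Q := by
  refine ext_of_forall_integral_eq_of_IsFiniteMeasure fun f => eq_of_forall_dist_le fun ε hε => ?_
  obtain ⟨p, hp⟩ := exists_polynomial_near_of_continuousOn a b f f.continuous.continuousOn
    (ε / 2) (half_pos hε)
  have hclose : ∀ (P' : Measure ℝ) [IsProbabilityMeasure P'], (∀ᵐ x ∂P', x ∈ Icc a b) →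
      Integrable (fun x => p.eval x) P' → dist (∫ x, f x ∂P') (∫ x, p.eval x ∂P') ≤ ε / 2 := by
    intro P' _ hP' hpP'
    rw [dist_eq_norm, ← integral_sub (f.integrable P') hpP']
    simpa using norm_integral_le_of_norm_le_const (hP'.mono fun x hx =>
      (by rw [Real.norm_eq_abs, abs_sub_comm]; exact (hp x hx).le : ‖f x - p.eval x‖ ≤ ε / 2))
  have hpoly : ∫ x, p.eval x ∂P = ∫ x, p.eval x ∂Q := by
    rw [(integral_polynomial_eval hPint p).2, (integral_polynomial_eval hQint p).2]
    simp_rw [hmom]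
  calc dist (∫ x, f x ∂P) (∫ x, f x ∂Q)
      ≤ dist (∫ x, f x ∂P) (∫ x, p.eval x ∂P) + dist (∫ x, p.eval x ∂P) (∫ x, p.eval x ∂Q)
        + dist (∫ x, p.eval x ∂Q) (∫ x, f x ∂Q) := dist_triangle4 _ _ _ _
    _ ≤ ε / 2 + 0 + ε / 2 := by
        gcongr
        · exact hclose P hP (integral_polynomial_eval hPint p).1
        · rw [hpoly, dist_self]
        · rw [dist_comm]; exact hclose Q hQ (integral_polynomial_eval hQint p).1
    _ = ε := by ring

theorem ae_mem_Icc_of_solvesMomentEquations {a α β t : ℝ} {μ : ℝ → Measure ℝ}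
    [IsFiniteMeasure (μ t)] (ht : 0 ≤ t) (hsupp : ∀ s : ℝ, 0 ≤ s → μ s (Iic 0) = 0)
    (hint : ∀ s : ℝ, 0 ≤ s → ∀ k : ℕ, Integrable (fun x => x ^ k) (μ s))
    (hcont : ∀ k : ℕ, ContinuousOn (fun s : ℝ => ∫ x, x ^ k ∂(μ s)) (Ici 0))
    (hm : SolvesMomentEquations a α β fun n s => ∫ x, x ^ n ∂(μ s)) :
    ∀ᵐ x ∂(μ t), x ∈ Icc 0 (4 * |a| * exp ((|α| + 16 * |β| + 1) * t) + 1) := by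
  have hpos : ∀ s, 0 ≤ s → ∀ᵐ x ∂(μ s), 0 < x := fun s hs =>
    (measure_eq_zero_iff_ae_notMem.mp (hsupp s hs)).mono fun x hx => not_le.mp hx
  have hnonneg : ∀ n s, 0 ≤ s → 0 ≤ ∫ x, x ^ n ∂(μ s) := fun n s hs =>
    integral_nonneg_of_ae ((hpos s hs).mono fun x hx => pow_nonneg hx.le n)
  have hle := ae_le_of_integral_pow_le ((hpos t ht).mono fun x hx => hx.le) (hint t ht)
    (by positivity) (lt_add_one _) fun n => hm.le_pow hcont hnonneg n ht
  filter_upwards [hpos t ht, hle] with x hx0 hx1 using ⟨hx0.le, hx1⟩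

theorem stmt12_general (a α : ℝ) (β : ℝ)
    (μ ν : ℝ → Measure ℝ)
    (hμprob : ∀ t, IsProbabilityMeasure (μ t)) (hνprob : ∀ t, IsProbabilityMeasure (ν t))
    -- supported in `(0,∞)`
    (hμsupp : ∀ t : ℝ, 0 ≤ t → μ t (Iic 0) = 0)
    (hνsupp : ∀ t : ℝ, 0 ≤ t → ν t (Iic 0) = 0)
    -- all moments finite and continuous in time
    (hμint : ∀ t : ℝ, 0 ≤ t → ∀ k : ℕ, Integrable (fun x => x ^ k) (μ t))
    (hνint : ∀ t : ℝ, 0 ≤ t → ∀ k : ℕ, Integrable (fun x => x ^ k) (ν t))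
    (hμcont : ∀ k : ℕ, ContinuousOn (fun t : ℝ => ∫ x, x ^ k ∂(μ t)) (Ici 0))
    (hνcont : ∀ k : ℕ, ContinuousOn (fun t : ℝ => ∫ x, x ^ k ∂(ν t)) (Ici 0))
    -- the geometric-Brownian-motion limiting equation
    (heqμ : ∀ f : ℝ → ℝ, PolyGrowthC2 f → ∀ t : ℝ, 0 ≤ t →
      ∫ x, f x ∂(μ t) = f a
        + α * (∫ s in (0:ℝ)..t, ∫ x, x * deriv f x ∂(μ s))
        + β * ∫ s in (0:ℝ)..t, ∫ x, ∫ y, deltaF f x y * (x * y) ∂(μ s) ∂(μ s))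
    (heqν : ∀ f : ℝ → ℝ, PolyGrowthC2 f → ∀ t : ℝ, 0 ≤ t →
      ∫ x, f x ∂(ν t) = f a
        + α * (∫ s in (0:ℝ)..t, ∫ x, x * deriv f x ∂(ν s))
        + β * ∫ s in (0:ℝ)..t, ∫ x, ∫ y, deltaF f x y * (x * y) ∂(ν s) ∂(ν s)) :
    ∀ t : ℝ, 0 ≤ t → μ t = ν t := by
  intro t ht
  have hmμ := solvesMomentEquations_integral_pow hμint heqμ
  have hmν := solvesMomentEquations_integral_pow hνint heqν
  exact ext_of_integral_pow_eq_of_ae_mem_Icc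
    (ae_mem_Icc_of_solvesMomentEquations ht hμsupp hμint hμcont hmμ)
    (ae_mem_Icc_of_solvesMomentEquations ht hνsupp hνint hνcont hmν) (hμint t ht) (hνint t ht)
    fun k => hmμ.unique hmν hμcont hνcont k t ht

theorem stmt12 (a α : ℝ) (ha : 0 < a) (β : ℝ) (hβ : β = 1 ∨ β = 2)
    (μ ν : ℝ → Measure ℝ)
    (hμprob : ∀ t, IsProbabilityMeasure (μ t)) (hνprob : ∀ t, IsProbabilityMeasure (ν t))
    -- supported in `(0,∞)`
    (hμsupp : ∀ t : ℝ, 0 ≤ t → μ t (Iic 0) = 0)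
    (hνsupp : ∀ t : ℝ, 0 ≤ t → ν t (Iic 0) = 0)
    -- all moments finite and continuous in time
    (hμint : ∀ t : ℝ, 0 ≤ t → ∀ k : ℕ, Integrable (fun x => x ^ k) (μ t))
    (hνint : ∀ t : ℝ, 0 ≤ t → ∀ k : ℕ, Integrable (fun x => x ^ k) (ν t))
    (hμcont : ∀ k : ℕ, ContinuousOn (fun t : ℝ => ∫ x, x ^ k ∂(μ t)) (Ici 0))
    (hνcont : ∀ k : ℕ, ContinuousOn (fun t : ℝ => ∫ x, x ^ k ∂(ν t)) (Ici 0))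
    -- initial condition δ_a
    (hμ0 : μ 0 = Measure.dirac a) (hν0 : ν 0 = Measure.dirac a)
    -- the geometric-Brownian-motion limiting equation
    (heqμ : ∀ f : ℝ → ℝ, PolyGrowthC2 f → ∀ t : ℝ, 0 ≤ t →
      ∫ x, f x ∂(μ t) = f a
        + α * (∫ s in (0:ℝ)..t, ∫ x, x * deriv f x ∂(μ s))
        + β * ∫ s in (0:ℝ)..t, ∫ x, ∫ y, deltaF f x y * (x * y) ∂(μ s) ∂(μ s))
    (heqν : ∀ f : ℝ → ℝ, PolyGrowthC2 f → ∀ t : ℝ, 0 ≤ t →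
      ∫ x, f x ∂(ν t) = f a
        + α * (∫ s in (0:ℝ)..t, ∫ x, x * deriv f x ∂(ν s))
        + β * ∫ s in (0:ℝ)..t, ∫ x, ∫ y, deltaF f x y * (x * y) ∂(ν s) ∂(ν s)) :
    ∀ t : ℝ, 0 ≤ t → μ t = ν t :=
  stmt12_general a α β μ ν hμprob hνprob hμsupp hνsupp hμint hνint hμcont hνcont heqμ heqν
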